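/- Sample error estimate: in the weighted regularized least squares setting with noisy data y_i = f*(x_i) + η_i where the η_i are independent, mean zero, with variances bounded by σ², for every λ > 0 and every 0 < δ < 1, with probability at least 1 − δ, ‖f_{z,λ} − f_{x,λ}‖_K ≤ ‖w‖_{ℝ^m} σ κ / (λ √δ), where f_{z,λ} = (S* D_w S + λI)^{-1} S* D_w y and f_{x,λ} = (S* D_w S + λI)^{-1} S* D_w (S f*). -/

import Mathlib

/-!
The noise enters linearly: `f_{z,λ} - f_{x,λ} = B (S* D_w η)` with `S* D_w η = ∑ᵢ wᵢ ηᵢ k(xᵢ)`.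
Since `S* D_w S` is a positive operator, `⟪(S* D_w S + λ) f, f⟫ ≥ λ ‖f‖²`, so `‖B‖ ≤ 1/λ`.
Independence and zero means kill the cross terms of `E ‖∑ᵢ wᵢ ηᵢ k(xᵢ)‖²`, leaving
`∑ᵢ wᵢ² K(xᵢ, xᵢ) E ηᵢ² ≤ ‖w‖² σ² κ²`, and Chebyshev's inequality for `‖S* D_w η‖` concludes.
-/

open MeasureTheory ProbabilityTheory
open scoped RealInnerProductSpace

section Regularization

variable {H : Type*} [NormedAddCommGroup H] [InnerProductSpace ℝ H]

theorem mul_norm_le_norm_add_smul {A : H →L[ℝ] H} (hA : ∀ f, 0 ≤ ⟪A f, f⟫) (lam : ℝ) (f : H) :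
    lam * ‖f‖ ≤ ‖A f + lam • f‖ := by
  have hquad : lam * (‖f‖ * ‖f‖) ≤ ‖A f + lam • f‖ * ‖f‖ :=
    calc lam * (‖f‖ * ‖f‖) ≤ ⟪A f + lam • f, f⟫ := by
          rw [inner_add_left, real_inner_smul_left, real_inner_self_eq_norm_mul_norm]
          linarith [hA f]
      _ ≤ ‖A f + lam • f‖ * ‖f‖ := real_inner_le_norm _ _
  rcases (norm_nonneg f).eq_or_lt with hf | hf
  · simp [← hf]
  · exact le_of_mul_le_mul_right (by linarith) hf

theorem mul_norm_apply_le_of_comp_eq_id {A B : H →L[ℝ] H} (hA : ∀ f, 0 ≤ ⟪A f, f⟫) {lam : ℝ}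
    (hB : (A + lam • ContinuousLinearMap.id ℝ H).comp B = ContinuousLinearMap.id ℝ H) (g : H) :
    lam * ‖B g‖ ≤ ‖g‖ := by
  simpa using mul_norm_le_norm_add_smul hA lam (B g) |>.trans_eq
    (congrArg (‖·‖) (ContinuousLinearMap.ext_iff.mp hB g))

variable [CompleteSpace H] {F : Type*} [NormedAddCommGroup F] [InnerProductSpace ℝ F]
  [CompleteSpace F]

theorem inner_adjoint_comp_comp_self_nonneg (S : H →L[ℝ] F) {D : F →L[ℝ] F}
    (hD : ∀ u, 0 ≤ ⟪D u, u⟫) (f : H) :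
    0 ≤ ⟪(ContinuousLinearMap.adjoint S).comp (D.comp S) f, f⟫ := by
  simpa [ContinuousLinearMap.adjoint_inner_left] using hD (S f)

theorem adjoint_apply_eq_sum_smul {ι : Type*} [Fintype ι] (S : H →L[ℝ] EuclideanSpace ℝ ι)
    (k : ι → H) (hS : ∀ f i, S f i = ⟪k i, f⟫) (u : EuclideanSpace ℝ ι) :
    ContinuousLinearMap.adjoint S u = ∑ i, u i • k i := by
  refine ext_inner_right ℝ fun f => ?_
  simp [ContinuousLinearMap.adjoint_inner_left, sum_inner, real_inner_smul_left, PiLp.inner_apply,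
    hS, mul_comm]

theorem inner_self_nonneg_of_diagonal {ι : Type*} [Fintype ι] {w : ι → ℝ} (hw : ∀ i, 0 ≤ w i)
    {D : EuclideanSpace ℝ ι →L[ℝ] EuclideanSpace ℝ ι} (hD : ∀ u i, D u i = w i * u i)
    (u : EuclideanSpace ℝ ι) : 0 ≤ ⟪D u, u⟫ := by
  simp only [PiLp.inner_apply, hD]
  exact Finset.sum_nonneg fun i _ => by
    simpa [mul_comm, mul_left_comm] using mul_nonneg (hw i) (mul_self_nonneg (u i))

end Regularization

section Variance

variable {Ω E ι : Type*} [MeasurableSpace Ω] {μ : Measure Ω} [NormedAddCommGroup E]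
  [InnerProductSpace ℝ E] [Fintype ι] {η : ι → Ω → ℝ}

theorem norm_sum_smul_sq (a : ι → ℝ) (v : ι → E) :
    ‖∑ i, a i • v i‖ ^ 2 = ∑ i, ∑ j, ⟪v i, v j⟫ * (a i * a j) := by
  simp only [← real_inner_self_eq_norm_sq, sum_inner, inner_sum, real_inner_smul_left,
    real_inner_smul_right]
  refine Finset.sum_congr rfl fun i _ => Finset.sum_congr rfl fun j _ => ?_
  rw [real_inner_comm (v j) (v i)]
  ring

theorem integrable_norm_sum_smul_sq (hη : ∀ i, MemLp (η i) 2 μ) (v : ι → E) :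
    Integrable (fun ω => ‖∑ i, η i ω • v i‖ ^ 2) μ := by
  have hprod (i j : ι) : Integrable (fun ω => η i ω * η j ω) μ := (hη i).integrable_mul (hη j)
  simp only [norm_sum_smul_sq]
  exact integrable_finsetSum _ fun i _ => integrable_finsetSum _ fun j _ => (hprod i j).const_mul _

theorem integral_norm_sum_smul_sq (hind : Pairwise fun i j => IndepFun (η i) (η j) μ)
    (hη : ∀ i, MemLp (η i) 2 μ) (hmean : ∀ i, ∫ ω, η i ω ∂μ = 0) (v : ι → E) :
    ∫ ω, ‖∑ i, η i ω • v i‖ ^ 2 ∂μ = ∑ i, ‖v i‖ ^ 2 * ∫ ω, η i ω ^ 2 ∂μ := by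
  classical
  have hcov : ∀ i j, ∫ ω, η i ω * η j ω ∂μ = if i = j then ∫ ω, η i ω ^ 2 ∂μ else 0 := by
    intro i j
    split_ifs with hij
    · simp [hij, sq]
    · simpa [hmean] using (hind hij).integral_mul_eq_mul_integral
        (hη i).aestronglyMeasurable (hη j).aestronglyMeasurable
  have hprod (i j : ι) : Integrable (fun ω => η i ω * η j ω) μ := (hη i).integrable_mul (hη j)
  simp only [norm_sum_smul_sq]
  rw [integral_finsetSum _ fun i _ => integrable_finsetSum _ fun j _ => (hprod i j).const_mul _]
  refine Finset.sum_congr rfl fun i _ => ?_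
  rw [integral_finsetSum _ fun j _ => (hprod i j).const_mul _]
  simp [integral_const_mul, hcov]

end Variance

section Chebyshev

variable {Ω : Type*} [MeasurableSpace Ω] {μ : Measure Ω} {f : Ω → ℝ} {c δ : ℝ}

theorem measure_div_sqrt_lt_le [IsFiniteMeasure μ] (hfi : Integrable (fun ω => f ω ^ 2) μ)
    (hc : 0 ≤ c) (hδ : 0 < δ) (h : ∫ ω, f ω ^ 2 ∂μ ≤ c ^ 2) :
    μ {ω | c / √δ < f ω} ≤ ENNReal.ofReal δ := by
  rcases hc.eq_or_lt with rfl | hc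
  · have hae : (fun ω => f ω ^ 2) =ᵐ[μ] 0 :=
      (integral_eq_zero_iff_of_nonneg (fun ω => sq_nonneg _) hfi).mp
        (le_antisymm (by simpa using h) (integral_nonneg fun ω => sq_nonneg _))
    refine (measure_mono_null (fun ω hω => ?_) (ae_iff.mp hae)).trans_le zero_le
    have : 0 < f ω := by simpa using hω
    simp [this.ne']
  set ε := c ^ 2 / δ
  have hε : 0 < ε := by positivity
  have hsub : {ω | c / √δ < f ω} ⊆ {ω | ε ≤ f ω ^ 2} := fun ω hω => by
    have : (c / √δ) ^ 2 = ε := by rw [div_pow, Real.sq_sqrt hδ.le]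
    simpa [this] using pow_le_pow_left₀ (by positivity) (show c / √δ < f ω from hω).le 2
  have hmarkov : ε * μ.real {ω | ε ≤ f ω ^ 2} ≤ ε * δ :=
    calc ε * μ.real {ω | ε ≤ f ω ^ 2} ≤ ∫ ω, f ω ^ 2 ∂μ :=
          mul_meas_ge_le_integral_of_nonneg (ae_of_all _ fun ω => sq_nonneg _) hfi ε
      _ ≤ ε * δ := by rw [div_mul_cancel₀ _ hδ.ne']; exact h
  refine (measure_mono hsub).trans ?_
  rw [ENNReal.le_ofReal_iff_toReal_le (measure_ne_top _ _) hδ.le]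
  exact le_of_mul_le_mul_left hmarkov hε

theorem ofReal_one_sub_le_measure_le_div_sqrt [IsProbabilityMeasure μ]
    (hfi : Integrable (fun ω => f ω ^ 2) μ) (hc : 0 ≤ c) (hδ : 0 < δ)
    (h : ∫ ω, f ω ^ 2 ∂μ ≤ c ^ 2) : ENNReal.ofReal (1 - δ) ≤ μ {ω | f ω ≤ c / √δ} := by
  set bad := {ω | c / √δ < f ω}
  have hcompl : badᶜ = {ω | f ω ≤ c / √δ} := by ext; simp [bad]
  calc ENNReal.ofReal (1 - δ) = 1 - ENNReal.ofReal δ := by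
        rw [ENNReal.ofReal_sub _ hδ.le, ENNReal.ofReal_one]
    _ ≤ 1 - μ bad := tsub_le_tsub_left (measure_div_sqrt_lt_le hfi hc hδ h) 1
    _ ≤ μ badᶜ := by
        rw [tsub_le_iff_left, ← measure_univ (μ := μ)]
        exact measure_univ_le_add_compl bad
    _ = μ {ω | f ω ≤ c / √δ} := by rw [hcompl]

end Chebyshev

theorem sample_error_estimate_general {X H Ω : Type*}
    [NormedAddCommGroup H] [InnerProductSpace ℝ H] [CompleteSpace H]
    [MeasurableSpace Ω] (μ : Measure Ω) [IsProbabilityMeasure μ]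
    (toFun : H → X → ℝ) (k : X → H) (K : X → X → ℝ) (κ : ℝ)
    (hK : ∀ x y : X, K x y = ⟪k x, k y⟫)
    (hrepro : ∀ (f : H) (x : X), ⟪k x, f⟫ = toFun f x)
    (hκ : ∀ x : X, K x x ≤ κ ^ 2) (hκ0 : 0 ≤ κ)
    {m : ℕ} (x : Fin m → X)
    (w : Fin m → ℝ) (hw : ∀ i, 0 ≤ w i)
    (lam : ℝ) (hlam : 0 < lam)
    (S : H →L[ℝ] EuclideanSpace ℝ (Fin m))
    (hS : ∀ (f : H) (i : Fin m), S f i = toFun f (x i))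
    (Dw : EuclideanSpace ℝ (Fin m) →L[ℝ] EuclideanSpace ℝ (Fin m))
    (hDw : ∀ (c : EuclideanSpace ℝ (Fin m)) (i : Fin m), Dw c i = w i * c i)
    (B : H →L[ℝ] H)
    (hB₁ : (((ContinuousLinearMap.adjoint S).comp (Dw.comp S)) +
        lam • ContinuousLinearMap.id ℝ H).comp B = ContinuousLinearMap.id ℝ H)
    (η : Fin m → Ω → ℝ)
    (hind : iIndepFun η μ)
    (hL2 : ∀ i, MemLp (η i) 2 μ)
    (hmean : ∀ i, ∫ ω, η i ω ∂μ = 0)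
    (σ : ℝ) (hσ0 : 0 ≤ σ)
    (hvar : ∀ i, ∫ ω, (η i ω) ^ 2 ∂μ ≤ σ ^ 2)
    (fstar : H)
    (δ : ℝ) (hδ0 : 0 < δ) :
    ENNReal.ofReal (1 - δ) ≤
      μ {ω | ‖B ((ContinuousLinearMap.adjoint S)
                (Dw (WithLp.toLp 2 (fun i => toFun fstar (x i) + η i ω) : EuclideanSpace ℝ (Fin m)))) -
              B ((ContinuousLinearMap.adjoint S) (Dw (S fstar)))‖ ≤
          Real.sqrt (∑ i, (w i) ^ 2) * σ * κ / (lam * Real.sqrt δ)} := by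
  set Z : Ω → H := fun ω => ∑ i, η i ω • (w i • k (x i))
  have hadj := adjoint_apply_eq_sum_smul S (k ∘ x) fun f i => by simp [hS, hrepro]
  have hnoise (ω : Ω) : B ((ContinuousLinearMap.adjoint S)
      (Dw (WithLp.toLp 2 (fun i => toFun fstar (x i) + η i ω) : EuclideanSpace ℝ (Fin m)))) -
      B ((ContinuousLinearMap.adjoint S) (Dw (S fstar))) = B (Z ω) := by
    simp only [← map_sub, hadj, ← Finset.sum_sub_distrib, ← sub_smul, hDw, hS, Z, smul_smul]
    congr 2 with i
    simp [mul_add, mul_comm]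
  have hB (g : H) : lam * ‖B g‖ ≤ ‖g‖ := mul_norm_apply_le_of_comp_eq_id
    (inner_adjoint_comp_comp_self_nonneg S (inner_self_nonneg_of_diagonal hw hDw)) hB₁ g
  have hZ : ∫ ω, ‖Z ω‖ ^ 2 ∂μ ≤ (Real.sqrt (∑ i, (w i) ^ 2) * σ * κ) ^ 2 := by
    rw [integral_norm_sum_smul_sq (fun i j hij => hind.indepFun hij) hL2 hmean, mul_pow, mul_pow,
      Real.sq_sqrt (Finset.sum_nonneg fun i _ => sq_nonneg _), Finset.sum_mul, Finset.sum_mul]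
    refine Finset.sum_le_sum fun i _ => ?_
    have hk : ‖k (x i)‖ ^ 2 ≤ κ ^ 2 := by rw [← real_inner_self_eq_norm_sq, ← hK]; exact hκ _
    calc ‖w i • k (x i)‖ ^ 2 * ∫ ω, η i ω ^ 2 ∂μ
        = w i ^ 2 * (‖k (x i)‖ ^ 2 * ∫ ω, η i ω ^ 2 ∂μ) := by
          rw [norm_smul, mul_pow, Real.norm_eq_abs, sq_abs, mul_assoc]
      _ ≤ w i ^ 2 * (κ ^ 2 * σ ^ 2) := by gcongr; exact hvar i
      _ = w i ^ 2 * σ ^ 2 * κ ^ 2 := by ring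
  refine (ofReal_one_sub_le_measure_le_div_sqrt (integrable_norm_sum_smul_sq hL2 _)
    (by positivity) hδ0 hZ).trans (measure_mono fun ω hω => ?_)
  simp only [Set.mem_ofPred_eq, hnoise] at hω ⊢
  rw [mul_comm lam, ← div_div, le_div_iff₀ hlam, mul_comm]
  exact (hB _).trans hω

/-- Sample error estimate. With noisy data `yᵢ = f*(xᵢ) + ηᵢ` (independent,
mean zero, variances ≤ σ²), for every `λ > 0` and `0 < δ < 1`, with probability `1 − δ`,
`‖f_{z,λ} − f_{x,λ}‖_K ≤ ‖w‖ σ κ / (λ √δ)`, where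
`f_{z,λ} = (S*D_wS + λI)⁻¹ S*D_w y` and `f_{x,λ} = (S*D_wS + λI)⁻¹ S*D_w (S f*)`. -/
theorem sample_error_estimate {X H Ω : Type*}
    [NormedAddCommGroup H] [InnerProductSpace ℝ H] [CompleteSpace H]
    [MeasurableSpace Ω] (μ : Measure Ω) [IsProbabilityMeasure μ]
    (toFun : H → X → ℝ) (k : X → H) (K : X → X → ℝ) (κ : ℝ)
    (hK : ∀ x y : X, K x y = ⟪k x, k y⟫)
    (hrepro : ∀ (f : H) (x : X), ⟪k x, f⟫ = toFun f x)
    (hκ : ∀ x : X, K x x ≤ κ ^ 2) (hκ0 : 0 ≤ κ)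
    {m : ℕ} (x : Fin m → X) (hx : Function.Injective x)
    (w : Fin m → ℝ) (hw : ∀ i, 0 ≤ w i)
    (lam : ℝ) (hlam : 0 < lam)
    (S : H →L[ℝ] EuclideanSpace ℝ (Fin m))
    (hS : ∀ (f : H) (i : Fin m), S f i = toFun f (x i))
    (Dw : EuclideanSpace ℝ (Fin m) →L[ℝ] EuclideanSpace ℝ (Fin m))
    (hDw : ∀ (c : EuclideanSpace ℝ (Fin m)) (i : Fin m), Dw c i = w i * c i)
    (B : H →L[ℝ] H)
    (hB₁ : (((ContinuousLinearMap.adjoint S).comp (Dw.comp S)) +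
        lam • ContinuousLinearMap.id ℝ H).comp B = ContinuousLinearMap.id ℝ H)
    (hB₂ : B.comp (((ContinuousLinearMap.adjoint S).comp (Dw.comp S)) +
        lam • ContinuousLinearMap.id ℝ H) = ContinuousLinearMap.id ℝ H)
    (η : Fin m → Ω → ℝ)
    (hind : iIndepFun η μ)
    (hmeas : ∀ i, Measurable (η i))
    (hL2 : ∀ i, MemLp (η i) 2 μ)
    (hmean : ∀ i, ∫ ω, η i ω ∂μ = 0)
    (σ : ℝ) (hσ0 : 0 ≤ σ)
    (hvar : ∀ i, ∫ ω, (η i ω) ^ 2 ∂μ ≤ σ ^ 2)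
    (fstar : H)
    (δ : ℝ) (hδ0 : 0 < δ) (hδ1 : δ < 1) :
    ENNReal.ofReal (1 - δ) ≤
      μ {ω | ‖B ((ContinuousLinearMap.adjoint S)
                (Dw (WithLp.toLp 2 (fun i => toFun fstar (x i) + η i ω) : EuclideanSpace ℝ (Fin m)))) -
              B ((ContinuousLinearMap.adjoint S) (Dw (S fstar)))‖ ≤
          Real.sqrt (∑ i, (w i) ^ 2) * σ * κ / (lam * Real.sqrt δ)} :=
  sample_error_estimate_general μ toFun k K κ hK hrepro hκ hκ0 x w hw lam hlam S hS Dw hDw B hB₁ η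
    hind hL2 hmean σ hσ0 hvar fstar δ hδ0
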